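/- arXiv:2207.06054 — 2 statements merged into one kernel-verified Lean document; each statement's English description precedes it below -/
import Mathlib

section
/- Let m and n be positive integers and let k satisfy 1 ≤ k ≤ n−1. Then q^{k(k+1)/2} (1−q^{n−k}) [mn choose n−k]_q ≡ (−1)^k (1−qⁿ) [mn choose n]_q (mod Φₙ(q)²). -/
open Polynomial Finset

/-- The Gaussian (q-)binomial coefficient `[n choose k]_r` (with base `r`), as a rational
function: `((1 - r^n)(1 - r^(n-1)) ⋯ (1 - r^(n-k+1))) / ((1 - r)(1 - r^2) ⋯ (1 - r^k))`
for `0 ≤ k ≤ n`, and `0` otherwise. -/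
noncomputable def qbinom (r : RatFunc ℚ) (n k : ℤ) : RatFunc ℚ :=
  if 0 ≤ k ∧ k ≤ n then
    (∏ i ∈ Finset.range k.toNat, (1 - r ^ (n - (i : ℤ)))) /
      (∏ i ∈ Finset.range k.toNat, (1 - r ^ ((i : ℤ) + 1)))
  else 0

/-- The Laurent polynomial `𝒜ₙ(q)` of Andrews–Baxter type. -/
noncomputable def qA (n : ℕ) : RatFunc ℚ :=
  let m : ℤ := (n : ℤ) / 3
  if n % 3 = 0 then
    (-1) ^ (n / 3) * (1 + RatFunc.X ^ m) * RatFunc.X ^ (m * (3 * m - 1) / 2)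
  else if n % 3 = 1 then
    (-1) ^ (n / 3) * RatFunc.X ^ (m * (3 * m + 1) / 2)
  else
    (-1) ^ (n / 3 + 1) * RatFunc.X ^ ((m + 1) * (3 * m + 2) / 2)

/-- The Laurent polynomial `ℬₙ(q)`. -/
noncomputable def qB (n : ℕ) : RatFunc ℚ :=
  let m : ℤ := (n : ℤ) / 3
  if n % 3 = 0 then
    (-1) ^ (n / 3) * (1 + RatFunc.X ^ (2 * m)) * RatFunc.X ^ (m * (3 * m - 5) / 2)
  else if n % 3 = 1 then
    (-1) ^ (n / 3) * RatFunc.X ^ (m * (3 * m + 1) / 2)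
  else
    (-1) ^ (n / 3 + 1) * RatFunc.X ^ ((m - 1) * (3 * m + 2) / 2)

/-- The q-trinomial coefficient `τ₀(n, m, q)`. -/
noncomputable def tau0 (n m : ℕ) : RatFunc ℚ :=
  ∑ k ∈ Finset.range (n + 1),
    (-1) ^ k * RatFunc.X ^ ((n : ℤ) * k - (k : ℤ) * ((k : ℤ) - 1) / 2) *
      qbinom RatFunc.X (n : ℤ) (k : ℤ) *
      qbinom RatFunc.X (2 * (n : ℤ) - 2 * (k : ℤ)) ((n : ℤ) - (m : ℤ) - (k : ℤ))

/-- The q-trinomial coefficient `T₀(n, m, q)`. -/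
noncomputable def T0 (n m : ℕ) : RatFunc ℚ :=
  ∑ k ∈ Finset.range (n + 1),
    (-1) ^ k * qbinom (RatFunc.X ^ 2) (n : ℤ) (k : ℤ) *
      qbinom RatFunc.X (2 * (n : ℤ) - 2 * (k : ℤ)) ((n : ℤ) - (m : ℤ) - (k : ℤ))

/-- The q-trinomial coefficient `T₁(n, m, q)`. -/
noncomputable def T1 (n m : ℕ) : RatFunc ℚ :=
  ∑ k ∈ Finset.range (n + 1),
    (-RatFunc.X) ^ k * qbinom (RatFunc.X ^ 2) (n : ℤ) (k : ℤ) *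
      qbinom RatFunc.X (2 * (n : ℤ) - 2 * (k : ℤ)) ((n : ℤ) - (m : ℤ) - (k : ℤ))

/-- `A ≡ B (mod P)` for rational functions `A`, `B` and a polynomial modulus `P`:
`A - B = P * C` for some rational function `C` whose denominator is coprime to `P`. -/
def rcong (A B : RatFunc ℚ) (P : Polynomial ℚ) : Prop :=
  ∃ C : RatFunc ℚ,
    A - B = algebraMap (Polynomial ℚ) (RatFunc ℚ) P * C ∧ IsCoprime C.denom P

/-- `A ≡ B (mod P)` as a polynomial congruence: `P` divides `A - B` in `ℚ[q]`,
i.e. `A - B = P * C` for some polynomial `C`. -/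
def pcong (A B : RatFunc ℚ) (P : Polynomial ℚ) : Prop :=
  ∃ C : Polynomial ℚ,
    A - B = algebraMap (Polynomial ℚ) (RatFunc ℚ) P * algebraMap (Polynomial ℚ) (RatFunc ℚ) C

noncomputable abbrev alg : Polynomial ℚ →+* RatFunc ℚ := algebraMap (Polynomial ℚ) (RatFunc ℚ)

lemma one_sub_X_pow_poly_ne (t : ℕ) (ht : 0 < t) : (1 : Polynomial ℚ) - X ^ t ≠ 0 := by
  intro h
  have h0 : ((1 : Polynomial ℚ) - X ^ t).coeff 0 = 1 := by
    simp [coeff_X_pow, ht.ne]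
  rw [h] at h0; simp at h0

lemma one_sub_X_pow_ne (t : ℕ) (ht : 0 < t) : (1 : RatFunc ℚ) - RatFunc.X ^ t ≠ 0 := by
  have h : (1 : RatFunc ℚ) - RatFunc.X ^ t = alg (1 - X ^ t) := by
    simp [map_sub, map_pow, RatFunc.algebraMap_X]
  rw [h]
  intro hc
  exact one_sub_X_pow_poly_ne t ht
    ((RatFunc.algebraMap_injective ℚ) (hc.trans (map_zero alg).symm))

lemma qbinom_nat (N a : ℕ) (h : a ≤ N) :
    qbinom RatFunc.X (N : ℤ) (a : ℤ) =
      (∏ i ∈ Finset.range a, (1 - RatFunc.X ^ (N - i))) /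
        (∏ i ∈ Finset.range a, (1 - RatFunc.X ^ (i + 1))) := by
  rw [qbinom, if_pos ⟨Int.natCast_nonneg a, by exact_mod_cast h⟩]
  rw [Int.toNat_natCast]
  have e1 : ∀ i ∈ Finset.range a, ((1:RatFunc ℚ) - RatFunc.X ^ ((N:ℤ) - (i:ℤ))) = (1 - RatFunc.X ^ (N - i)) := by
    intro i hi
    have hi' : i ≤ N := le_trans (mem_range.mp hi).le h
    rw [show (N : ℤ) - (i : ℤ) = ((N - i : ℕ) : ℤ) by omega, zpow_natCast]
  have e2 : ∀ i ∈ Finset.range a, ((1:RatFunc ℚ) - RatFunc.X ^ ((i:ℤ) + 1)) = (1 - RatFunc.X ^ (i + 1)) := by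
    intro i hi
    rw [show ((i : ℤ) + 1) = ((i + 1 : ℕ) : ℤ) by omega, zpow_natCast]
  rw [Finset.prod_congr rfl e1, Finset.prod_congr rfl e2]

lemma den_ne (a : ℕ) : (∏ i ∈ Finset.range a, ((1:RatFunc ℚ) - RatFunc.X ^ (i + 1))) ≠ 0 :=
  Finset.prod_ne_zero_iff.mpr fun i _ => one_sub_X_pow_ne (i+1) i.succ_pos

lemma qbinom_step (N a : ℕ) (h : a + 1 ≤ N) :
    qbinom RatFunc.X (N : ℤ) ((a : ℤ) + 1) * (1 - RatFunc.X ^ (a + 1)) =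
      qbinom RatFunc.X (N : ℤ) (a : ℤ) * (1 - RatFunc.X ^ (N - a)) := by
  have h1 : ((a : ℤ) + 1) = ((a + 1 : ℕ) : ℤ) := by omega
  rw [h1, qbinom_nat N (a+1) h, qbinom_nat N a (le_trans (Nat.le_succ a) h),
    Finset.prod_range_succ, Finset.prod_range_succ]
  have hd := den_ne a
  have hf := one_sub_X_pow_ne (a+1) a.succ_pos
  field_simp

lemma qbinom_zero (N : ℕ) : qbinom RatFunc.X (N : ℤ) (0 : ℤ) = 1 := by
  rw [show ((0:ℤ)) = ((0:ℕ):ℤ) by norm_num, qbinom_nat N 0 (Nat.zero_le N)]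
  simp

lemma qbinom_diag (N : ℕ) : qbinom RatFunc.X (N : ℤ) (N : ℤ) = 1 := by
  rw [qbinom_nat N N le_rfl]
  have : (∏ i ∈ Finset.range N, ((1:RatFunc ℚ) - RatFunc.X ^ (N - i))) =
      ∏ i ∈ Finset.range N, ((1:RatFunc ℚ) - RatFunc.X ^ (i + 1)) := by
    rw [← Finset.prod_range_reflect]
    refine Finset.prod_congr rfl fun i hi => ?_
    have hi' := mem_range.mp hi
    congr 2
    omega
  rw [this, div_self (den_ne N)]

lemma qbinom_pascal (N b : ℕ) (hb : b < N) :
    qbinom RatFunc.X ((N + 1 : ℕ) : ℤ) ((b + 1 : ℕ) : ℤ) =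
      qbinom RatFunc.X (N : ℤ) (b : ℤ) +
        RatFunc.X ^ (b + 1) * qbinom RatFunc.X (N : ℤ) ((b + 1 : ℕ) : ℤ) := by
  rw [qbinom_nat (N+1) (b+1) (by omega), qbinom_nat N b (by omega), qbinom_nat N (b+1) hb]
  rw [Finset.prod_range_succ', Finset.prod_range_succ (fun i => (1:RatFunc ℚ) - RatFunc.X ^ (N - i)),
    Finset.prod_range_succ (fun i => (1:RatFunc ℚ) - RatFunc.X ^ (i + 1))]
  have e1 : ∀ i ∈ Finset.range b, ((1:RatFunc ℚ) - RatFunc.X ^ (N + 1 - (i+1))) = (1 - RatFunc.X ^ (N - i)) := by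
    intro i hi; congr 2; omega
  rw [Finset.prod_congr rfl e1]
  have hd := den_ne b
  have hf := one_sub_X_pow_ne (b+1) b.succ_pos
  have key : ((1:RatFunc ℚ) - RatFunc.X ^ (N+1)) =
      (1 - RatFunc.X ^ (b+1)) + RatFunc.X ^ (b+1) * (1 - RatFunc.X ^ (N - b)) := by
    have h2 : RatFunc.X ^ (b+1) * RatFunc.X ^ (N - b) = (RatFunc.X : RatFunc ℚ) ^ (N+1) := by
      rw [← pow_add]; congr 1; omega
    rw [mul_sub, mul_one, h2]; ring
  field_simp
  rw [Nat.sub_zero, key]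

lemma qbinom_poly : ∀ N a : ℕ, a ≤ N → ∃ g : Polynomial ℚ, qbinom RatFunc.X (N : ℤ) (a : ℤ) = alg g := by
  intro N
  induction N with
  | zero => intro a ha; exact ⟨1, by simpa [Nat.le_zero.mp ha] using (qbinom_zero 0).trans (by simp)⟩
  | succ N ih =>
    intro a ha
    match a, ha with
    | 0, _ => exact ⟨1, by simpa using qbinom_zero (N+1)⟩
    | b+1, ha =>
      rcases Nat.lt_or_ge b N with hb | hb
      · obtain ⟨g1, hg1⟩ := ih b (by omega)
        obtain ⟨g2, hg2⟩ := ih (b+1) (by omega)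
        refine ⟨g1 + X ^ (b+1) * g2, ?_⟩
        rw [qbinom_pascal N b hb, hg1, hg2]
        simp [map_add, map_mul, map_pow, RatFunc.algebraMap_X]
      · have : b + 1 = N + 1 := by omega
        rw [this]
        exact ⟨1, by simpa using qbinom_diag (N+1)⟩

-- Φₙ does not divide X^t - 1 for 0 < t < n
lemma cyc_not_dvd (n t : ℕ) (hn : 0 < n) (ht : 0 < t) (htn : t < n) :
    ¬ (cyclotomic n ℚ ∣ (1 : Polynomial ℚ) - X ^ t) := by
  intro hdvd
  have hdvd' : cyclotomic n ℂ ∣ (1 : Polynomial ℂ) - X ^ t := by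
    have := map_dvd (mapRingHom (algebraMap ℚ ℂ)) hdvd
    simpa [map_cyclotomic] using this
  set ζ : ℂ := Complex.exp (2 * Real.pi * Complex.I / n)
  have hζ : IsPrimitiveRoot ζ n := Complex.isPrimitiveRoot_exp n hn.ne'
  have hroot : IsRoot (cyclotomic n ℂ) ζ := hζ.isRoot_cyclotomic hn
  obtain ⟨c, hc⟩ := hdvd'
  have : (1 : ℂ) - ζ ^ t = 0 := by
    have := congrArg (Polynomial.eval ζ) hc
    simpa [hroot.eq_zero] using this
  have hpow : ζ ^ t = 1 := by linear_combination -this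
  have := (hζ.pow_eq_one_iff_dvd t).mp hpow
  exact absurd (Nat.le_of_dvd ht this) (by omega)

-- Φₙ divides the polynomial representing qbinom X (m*n) a, when 0 < a < n (well a ≤ n-1), a ≥ 1
lemma cyc_dvd_qbinom (m n a : ℕ) (hm : 0 < m) (hn : 0 < n) (ha1 : 1 ≤ a) (ha2 : a < n)
    (g : Polynomial ℚ) (hg : qbinom RatFunc.X ((m*n : ℕ) : ℤ) (a : ℤ) = alg g) :
    cyclotomic n ℚ ∣ g := by
  have haN : a ≤ m * n := le_trans ha2.le (Nat.le_mul_of_pos_left n hm)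
  have hq := qbinom_nat (m*n) a haN
  set Np : Polynomial ℚ := ∏ i ∈ Finset.range a, (1 - X ^ (m*n - i)) with hNp
  set Dp : Polynomial ℚ := ∏ i ∈ Finset.range a, (1 - X ^ (i + 1)) with hDp
  have hmapN : alg Np = ∏ i ∈ Finset.range a, ((1:RatFunc ℚ) - RatFunc.X ^ (m*n - i)) := by
    rw [hNp, map_prod]; simp [RatFunc.algebraMap_X]
  have hmapD : alg Dp = ∏ i ∈ Finset.range a, ((1:RatFunc ℚ) - RatFunc.X ^ (i + 1)) := by
    rw [hDp, map_prod]; simp [RatFunc.algebraMap_X]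
  have hDne : alg Dp ≠ 0 := by rw [hmapD]; exact den_ne a
  have hkey : alg (g * Dp) = alg Np := by
    rw [map_mul, ← hg, hq, hmapN, ← hmapD, div_mul_cancel₀]
    exact hDne
  have hkey' : g * Dp = Np := RatFunc.algebraMap_injective ℚ hkey
  have hP : Prime (cyclotomic n ℚ) := (cyclotomic.irreducible_rat hn).prime
  -- Φₙ ∣ Np via the i = 0 factor
  have hNdvd : cyclotomic n ℚ ∣ Np := by
    have h0 : (0:ℕ) ∈ Finset.range a := mem_range.mpr ha1
    refine dvd_trans ?_ (Finset.dvd_prod_of_mem _ h0)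
    have : cyclotomic n ℚ ∣ X ^ (m*n) - 1 := by
      refine dvd_trans (cyclotomic.dvd_X_pow_sub_one n ℚ) ?_
      have := sub_dvd_pow_sub_pow (X ^ n : Polynomial ℚ) 1 m
      simpa [← pow_mul, Nat.mul_comm] using this
    have h2 : cyclotomic n ℚ ∣ (1 : Polynomial ℚ) - X ^ (m*n) := by
      rw [show (1 : Polynomial ℚ) - X ^ (m*n) = -(X ^ (m*n) - 1) by ring]
      exact dvd_neg.mpr this
    simpa [Nat.sub_zero] using h2
  have hDnd : ¬ cyclotomic n ℚ ∣ Dp := by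
    intro hd
    obtain ⟨i, hi, hdi⟩ := hP.exists_mem_finset_dvd hd
    exact cyc_not_dvd n (i+1) hn i.succ_pos (by have := mem_range.mp hi; omega) hdi
  rcases (hP.dvd_mul.mp (hkey' ▸ hNdvd : cyclotomic n ℚ ∣ g * Dp)) with h | h
  · exact h
  · exact absurd h hDnd

/-- for positive integers `m`, `n` and `1 ≤ k ≤ n−1`,
`q^{k(k+1)/2}(1−q^{n−k})[mn choose n−k]_q ≡ (−1)^k (1−qⁿ)[mn choose n]_q  (mod Φₙ(q)²)`. -/
theorem qbinom_shift_congr (m n k : ℕ) (hm : 0 < m) (hn : 0 < n)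
    (hk1 : 1 ≤ k) (hk2 : k ≤ n - 1) :
    pcong (RatFunc.X ^ (k * (k + 1) / 2) * (1 - RatFunc.X ^ (n - k)) *
        qbinom RatFunc.X ((m : ℤ) * n) ((n : ℤ) - (k : ℤ)))
      ((-1) ^ k * (1 - RatFunc.X ^ n) * qbinom RatFunc.X ((m : ℤ) * n) (n : ℤ))
      (Polynomial.cyclotomic n ℚ ^ 2) := by
  have hn2 : 2 ≤ n := by omega
  set P : Polynomial ℚ := cyclotomic n ℚ with hPdef
  have hPirr : Irreducible P := cyclotomic.irreducible_rat hn
  have hPprime : Prime P := hPirr.prime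
  have hPn : P ∣ (1 : Polynomial ℚ) - X ^ n := by
    rw [show (1 : Polynomial ℚ) - X ^ n = -(X ^ n - 1) by ring]
    exact dvd_neg.mpr (cyclotomic.dvd_X_pow_sub_one n ℚ)
  have hPmn : P ∣ (X : Polynomial ℚ) ^ ((m-1)*n) - 1 :=
    dvd_trans (cyclotomic.dvd_X_pow_sub_one n ℚ)
      (by simpa [← pow_mul, Nat.mul_comm] using sub_dvd_pow_sub_pow ((X : Polynomial ℚ) ^ n) 1 (m-1))
  have hcast : ((m : ℤ) * n) = ((m*n : ℕ) : ℤ) := by push_cast; ring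
  set F : ℕ → RatFunc ℚ := fun j =>
    RatFunc.X ^ (j * (j + 1) / 2) * (1 - RatFunc.X ^ (n - j)) *
      qbinom RatFunc.X ((m : ℤ) * n) ((n : ℤ) - (j : ℤ)) with hF
  -- polynomial representatives
  have Hex : ∀ j : ℕ, ∃ hp : Polynomial ℚ, j ≤ n - 1 → (F j = alg hp ∧ P ∣ hp) := by
    intro j
    by_cases hj : j ≤ n - 1
    · have hjn : n - j ≤ m * n := le_trans (Nat.sub_le n j) (Nat.le_mul_of_pos_left n hm)
      obtain ⟨g, hg⟩ := qbinom_poly (m*n) (n-j) hjn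
      have hcast2 : ((n : ℤ) - (j : ℤ)) = (((n - j : ℕ)) : ℤ) := by omega
      refine ⟨X ^ (j * (j + 1) / 2) * ((1 - X ^ (n - j)) * g), fun _ => ⟨?_, ?_⟩⟩
      · rw [hF]
        simp only [hcast, hcast2, hg, map_mul, map_sub, map_pow, map_one, RatFunc.algebraMap_X]
        ring
      · rcases Nat.eq_zero_or_pos j with hj0 | hj0
        · subst hj0
          simp only [Nat.sub_zero]
          exact Dvd.dvd.mul_left (Dvd.dvd.mul_right hPn g) _
        · have : P ∣ g := cyc_dvd_qbinom m n (n-j) hm hn (by omega) (by omega) g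
            hg
          exact Dvd.dvd.mul_left (Dvd.dvd.mul_left this _) _
    · exact ⟨0, fun c => absurd c hj⟩
  choose hp hhp using Hex
  -- the exact rational-function identity
  have claimA : ∀ j : ℕ, 1 ≤ j → j ≤ n - 1 →
      F j * (1 - RatFunc.X ^ ((m-1)*n + j)) = RatFunc.X ^ j * (1 - RatFunc.X ^ (n - j)) * F (j-1) := by
    intro j hj1 hj2
    have ha1 : n - (j-1) = (n - j) + 1 := by omega
    have hnm : n ≤ m * n := Nat.le_mul_of_pos_left n hm
    have ha2 : (n - j) + 1 ≤ m * n := by omega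
    have ha3 : m * n - (n - j) = (m-1)*n + j := by
      have : n ≤ m * n := Nat.le_mul_of_pos_left n hm
      cases m with
      | zero => omega
      | succ m' => simp [Nat.succ_mul] at *; omega
    have hstep := qbinom_step (m*n) (n-j) ha2
    rw [ha3] at hstep
    have hcj : ((n : ℤ) - ((j-1 : ℕ) : ℤ)) = (((n-j : ℕ)) : ℤ) + 1 := by omega
    have hcj2 : ((n : ℤ) - (j : ℤ)) = (((n-j : ℕ)) : ℤ) := by omega
    have he : j * (j + 1) / 2 = (j-1) * ((j-1) + 1) / 2 + j := by
      obtain ⟨i, rfl⟩ : ∃ i, j = i + 1 := ⟨j - 1, by omega⟩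
      simp only [Nat.add_sub_cancel]
      have h2 : 2 ∣ i * (i+1) := (Nat.even_mul_succ_self i).two_dvd
      have h3 : (i+1) * ((i+1)+1) = i * (i+1) + 2 * (i+1) := by ring
      omega
    rw [hF]
    simp only [hcast, hcj, hcj2, ha1, he]
    rw [pow_add]
    calc RatFunc.X ^ ((j-1) * ((j-1) + 1) / 2) * RatFunc.X ^ j * (1 - RatFunc.X ^ (n - j)) *
          qbinom RatFunc.X ((m*n : ℕ) : ℤ) (((n-j : ℕ)) : ℤ) * (1 - RatFunc.X ^ ((m-1)*n + j))
        = RatFunc.X ^ j * (1 - RatFunc.X ^ (n - j)) *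
            (RatFunc.X ^ ((j-1) * ((j-1) + 1) / 2) *
              (qbinom RatFunc.X ((m*n : ℕ) : ℤ) (((n-j : ℕ)) : ℤ) * (1 - RatFunc.X ^ ((m-1)*n + j)))) := by
          ring
      _ = _ := by rw [← hstep]; ring
  -- polynomial identity
  have polyId : ∀ j : ℕ, 1 ≤ j → j ≤ n - 1 →
      hp j * (1 - X ^ ((m-1)*n + j)) = X ^ j * (1 - X ^ (n - j)) * hp (j-1) := by
    intro j hj1 hj2
    have h1 := (hhp j hj2).1
    have h0 := (hhp (j-1) (by omega)).1
    apply RatFunc.algebraMap_injective ℚ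
    simp only [map_mul, map_sub, map_pow, map_one, RatFunc.algebraMap_X]
    rw [← h1, ← h0]
    exact claimA j hj1 hj2
  -- step divisibility
  have step : ∀ j : ℕ, 1 ≤ j → j ≤ n - 1 → P ^ 2 ∣ hp j + hp (j-1) := by
    intro j hj1 hj2
    have hid := polyId j hj1 hj2
    have key : (1 - X ^ j) * (hp j + hp (j-1)) =
        hp (j-1) * (1 - X ^ n) + hp j * X ^ j * (X ^ ((m-1)*n) - 1) := by
      have e1 : (X : Polynomial ℚ) ^ ((m-1)*n + j) = X ^ ((m-1)*n) * X ^ j := by rw [pow_add]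
      have e2 : (X : Polynomial ℚ) ^ n = X ^ (n - j) * X ^ j := by
        rw [← pow_add]; congr 1; omega
      rw [e2]
      linear_combination hid - hp j * e1
    have hdvd : P ^ 2 ∣ (1 - X ^ j) * (hp j + hp (j-1)) := by
      rw [key, sq]
      exact dvd_add (mul_dvd_mul (hhp (j-1) (by omega)).2 hPn)
        (mul_dvd_mul (Dvd.dvd.mul_right (hhp j hj2).2 _) hPmn)
    have hcop : IsCoprime (P ^ 2) (1 - X ^ j) :=
      ((hPirr.coprime_iff_not_dvd).mpr (cyc_not_dvd n j hn hj1 (by omega))).pow_left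
    exact hcop.dvd_of_dvd_mul_left hdvd
  -- induction
  have main : ∀ j : ℕ, j ≤ k → P ^ 2 ∣ hp j - (-1) ^ j * hp 0 := by
    intro j
    induction j with
    | zero => intro _; simp
    | succ i ih =>
      intro hik
      have h1 := step (i+1) (by omega) (by omega)
      have h2 := ih (by omega)
      have : hp (i+1) - (-1)^(i+1) * hp 0 = (hp (i+1) + hp ((i+1)-1)) - (hp i - (-1)^i * hp 0) := by
        simp only [Nat.add_sub_cancel, pow_succ]
        ring
      rw [this]
      exact dvd_sub h1 h2
  obtain ⟨C, hC⟩ := main k (le_refl k)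
  refine ⟨C, ?_⟩
  have hFk := (hhp k hk2).1
  have hF0 := (hhp 0 (by omega)).1
  have hB : (-1 : RatFunc ℚ) ^ k * (1 - RatFunc.X ^ n) * qbinom RatFunc.X ((m : ℤ) * n) (n : ℤ) =
      (-1) ^ k * F 0 := by
    rw [hF]
    simp [mul_assoc]
  rw [show RatFunc.X ^ (k * (k + 1) / 2) * (1 - RatFunc.X ^ (n - k)) *
        qbinom RatFunc.X ((m : ℤ) * n) ((n : ℤ) - (k : ℤ)) = F k from rfl, hB, hFk, hF0]
  rw [show ((-1 : RatFunc ℚ) ^ k * alg (hp 0)) = alg ((-1)^k * hp 0) by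
    simp [map_mul, map_pow, map_neg, map_one]]
  rw [← map_sub, hC, map_mul]
end

section
/- Let m and n be positive integers. Then the following exact identity of polynomials in q holds: τ₀(mn,(m−1)n,q) = (−1)ⁿ q^{n((2m−1)n+1)/2} [mn choose n]_q + [2mn choose n]_q + (−1)ⁿ Σ_{k=1}^{n−1} (−1)^k q^{(n−k)((2m−1)n+k+1)/2} [mn choose n−k]_q [2n(m−1)+2k choose k]_q. -/
open Polynomial Finset

section Aux

lemma qbinom_zero' (r : RatFunc ℚ) {n : ℤ} (h : 0 ≤ n) : qbinom r n 0 = 1 := by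
  simp [qbinom, h]

lemma qbinom_neg (r : RatFunc ℚ) {n k : ℤ} (h : k < 0) : qbinom r n k = 0 := by
  rw [qbinom, if_neg]; omega

lemma exp_cast (m n k : ℕ) (hm : 1 ≤ m) (hk : k ≤ n) :
    ((m * n : ℕ) : ℤ) * ((n - k : ℕ) : ℤ) -
      ((n - k : ℕ) : ℤ) * (((n - k : ℕ) : ℤ) - 1) / 2 =
      (((n - k) * ((2 * m - 1) * n + k + 1) / 2 : ℕ) : ℤ) := by
  have h2m : ((2 * m - 1 : ℕ) : ℤ) = 2 * (m : ℤ) - 1 := by omega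
  have hnk : ((n - k : ℕ) : ℤ) = (n : ℤ) - k := by omega
  rw [Int.natCast_div]
  push_cast [h2m, hnk]
  set a : ℤ := (n : ℤ) - k with ha
  obtain ⟨b, hb⟩ : Even (a * (a - 1)) := Int.even_mul_pred_self a
  have h1 : a * (a - 1) / 2 = b := by omega
  have h2 : a * ((2 * (m : ℤ) - 1) * n + k + 1) = 2 * ((m : ℤ) * n * a - b) := by
    have hb' : a * (a - 1) = b + b := hb
    rw [ha] at hb' ⊢
    linear_combination -hb'
  rw [h1, h2, Int.mul_ediv_cancel_left _ (by norm_num)]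

end Aux
/-- for positive integers `m`, `n`, the exact identity
`τ₀(mn,(m−1)n,q) = (−1)ⁿ q^{n((2m−1)n+1)/2} [mn choose n]_q + [2mn choose n]_q
  + (−1)ⁿ Σ_{k=1}^{n−1} (−1)^k q^{(n−k)((2m−1)n+k+1)/2} [mn choose n−k]_q
      [2n(m−1)+2k choose k]_q`. -/
theorem tau0_expansion (m n : ℕ) (hm : 0 < m) (hn : 0 < n) :
    tau0 (m * n) ((m - 1) * n) =
      (-1) ^ n * RatFunc.X ^ (n * ((2 * m - 1) * n + 1) / 2) *
          qbinom RatFunc.X ((m : ℤ) * n) (n : ℤ) +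
        qbinom RatFunc.X (2 * (m : ℤ) * n) (n : ℤ) +
        (-1) ^ n *
          ∑ k ∈ Finset.Icc 1 (n - 1),
            (-1) ^ k * RatFunc.X ^ ((n - k) * ((2 * m - 1) * n + k + 1) / 2) *
              qbinom RatFunc.X ((m : ℤ) * n) ((n : ℤ) - (k : ℤ)) *
              qbinom RatFunc.X (2 * (n : ℤ) * ((m : ℤ) - 1) + 2 * (k : ℤ)) (k : ℤ) := by
  have hnm : n ≤ m * n := Nat.le_mul_of_pos_left n hm
  have hM : (((m - 1) * n : ℕ) : ℤ) = (m : ℤ) * n - n := by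
    push_cast [Nat.cast_sub hm]
    ring
  set F : ℕ → RatFunc ℚ := fun k =>
    (-1) ^ k * RatFunc.X ^ (((m * n : ℕ) : ℤ) * (k : ℤ) - (k : ℤ) * ((k : ℤ) - 1) / 2) *
      qbinom RatFunc.X ((m * n : ℕ) : ℤ) (k : ℤ) *
      qbinom RatFunc.X (2 * ((m * n : ℕ) : ℤ) - 2 * (k : ℤ))
        (((m * n : ℕ) : ℤ) - (((m - 1) * n : ℕ) : ℤ) - (k : ℤ)) with hF
  have h0 : tau0 (m * n) ((m - 1) * n) = ∑ k ∈ Finset.range (m * n + 1), F k := rfl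
  have h1 : ∑ k ∈ Finset.range (m * n + 1), F k = ∑ k ∈ Finset.range (n + 1), F k := by
    refine (Finset.sum_subset (Finset.range_subset_range.2 (by omega)) ?_).symm
    intro x hx hx'
    have hx1 : n < x := by simpa using hx'
    have hneg : ((m * n : ℕ) : ℤ) - (((m - 1) * n : ℕ) : ℤ) - (x : ℤ) < 0 := by
      rw [hM]; omega
    simp only [hF]
    rw [qbinom_neg _ hneg, mul_zero]
  have h2 : ∑ k ∈ Finset.range (n + 1), F k =
      F n + (F 0 + ∑ k ∈ Finset.Icc 1 (n - 1), F k) := by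
    rw [Finset.sum_range_succ,
      show Finset.range n = insert 0 (Finset.Icc 1 (n - 1)) from by ext x; simp; omega,
      Finset.sum_insert (by simp)]
    ring
  have hFn : F n = (-1) ^ n * RatFunc.X ^ (n * ((2 * m - 1) * n + 1) / 2) *
      qbinom RatFunc.X ((m : ℤ) * n) (n : ℤ) := by
    simp only [hF]
    have e1 : ((m * n : ℕ) : ℤ) - (((m - 1) * n : ℕ) : ℤ) - (n : ℤ) = 0 := by
      rw [hM]; push_cast; ring
    have e2 : ((m * n : ℕ) : ℤ) * (n : ℤ) - (n : ℤ) * ((n : ℤ) - 1) / 2 =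
        ((n * ((2 * m - 1) * n + 1) / 2 : ℕ) : ℤ) := by
      simpa using exp_cast m n 0 hm (Nat.zero_le n)
    rw [e1, qbinom_zero' _ (by omega), e2, zpow_natCast, mul_one,
      show ((m * n : ℕ) : ℤ) = (m : ℤ) * n from by push_cast; ring]
  have hF0 : F 0 = qbinom RatFunc.X (2 * (m : ℤ) * n) (n : ℤ) := by
    simp only [hF, Nat.cast_zero, mul_zero, zero_mul, Int.zero_ediv, sub_zero, zpow_zero,
      pow_zero, one_mul]
    rw [qbinom_zero' _ (by positivity), one_mul,
      show (2 * ((m * n : ℕ) : ℤ)) = 2 * (m : ℤ) * n from by push_cast; ring,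
      show ((m * n : ℕ) : ℤ) - (((m - 1) * n : ℕ) : ℤ) = (n : ℤ) from by rw [hM]; push_cast; ring]
  have h3 : ∑ k ∈ Finset.Icc 1 (n - 1), F k =
      (-1) ^ n *
        ∑ k ∈ Finset.Icc 1 (n - 1),
          (-1) ^ k * RatFunc.X ^ ((n - k) * ((2 * m - 1) * n + k + 1) / 2) *
            qbinom RatFunc.X ((m : ℤ) * n) ((n : ℤ) - (k : ℤ)) *
            qbinom RatFunc.X (2 * (n : ℤ) * ((m : ℤ) - 1) + 2 * (k : ℤ)) (k : ℤ) := by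
    rw [Finset.mul_sum]
    refine Finset.sum_nbij' (fun k => n - k) (fun k => n - k) ?_ ?_ ?_ ?_ ?_
    · intro a ha; simp only [Finset.mem_Icc] at ha ⊢; omega
    · intro a ha; simp only [Finset.mem_Icc] at ha ⊢; omega
    · intro a ha; simp only [Finset.mem_Icc] at ha; show n - (n - a) = a; omega
    · intro a ha; simp only [Finset.mem_Icc] at ha; show n - (n - a) = a; omega
    · intro k hk
      simp only [Finset.mem_Icc] at hk
      have hkn : k ≤ n := by omega
      have hkn2 : n - k ≤ n := Nat.sub_le n k
      have hc : ((n - k : ℕ) : ℤ) = (n : ℤ) - (k : ℤ) := by omega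
      have hsign : ((-1 : RatFunc ℚ)) ^ n * (-1) ^ (n - k) = (-1) ^ k := by
        rw [← pow_add, show n + (n - k) = k + 2 * (n - k) from by omega, pow_add, pow_mul]
        norm_num
      have hexp := exp_cast m n (n - k) hm hkn2
      rw [Nat.sub_sub_self hkn] at hexp
      simp only [hF]
      rw [hexp, zpow_natCast, Nat.sub_sub_self hkn,
        show ((n : ℤ) - ((n - k : ℕ) : ℤ)) = (k : ℤ) from by omega,
        show (2 * (n : ℤ) * ((m : ℤ) - 1) + 2 * ((n - k : ℕ) : ℤ)) =
          2 * ((m * n : ℕ) : ℤ) - 2 * (k : ℤ) from by rw [hc]; push_cast; ring,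
        show (((m * n : ℕ) : ℤ) - (((m - 1) * n : ℕ) : ℤ) - (k : ℤ)) = ((n - k : ℕ) : ℤ) from by
          rw [hM, hc]; push_cast; ring,
        show ((m : ℤ) * n) = ((m * n : ℕ) : ℤ) from by push_cast; ring,
        ← hsign]
      ring
  rw [h0, h1, h2, hFn, hF0, h3]
  ring
end
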